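/- Fix n ≥ 1, b ∈ {1,…,n}, σ ≥ 0, σ₀ > 0, and a diagonal matrix D = diag(d_1,…,d_n) with d_1 ≥ d_2 ≥ … ≥ d_n ≥ 0, and let g be the density on ℝⁿ of the multivariate Gaussian distribution N(0, σ²D + σ₀²I_n). Fix a vector w ∈ ℝⁿ, let M(n,b) be the set of permutations ψ of {1,…,n} with ψ(i) = i for all i ≤ n−b, and for ψ ∈ M(n,b) write w_ψ = (w_{ψ(1)},…,w_{ψ(n)})ᵀ. Let ν be the probability measure on M(n,b) with ν({ψ}) = g(w_ψ)/Σ_{φ∈M(n,b)} g(w_φ), and let ν₀ be the uniform probability measure on M(n,b). Then ‖ν − ν₀‖_TV ≤ (e^{Δ̄} − 1)/2, where Δ̄ = [d_a·σ² / (2σ₀²(σ²d_a + σ₀²))]·Σ_{j=a}^n w_j² with a = n − b + 1. -/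

import Mathlib

/-!
Write `g(w_ψ) = K · exp(-E ψ)` with `E ψ = ∑ j, w (ψ j)² / c j` and `c j = 2(σ² d_j + σ₀²)`.
A permutation in `M(n,b)` only moves the tail positions `j ≥ a`, on which
`2σ₀² ≤ c j ≤ c a`; on the tail it merely permutes the squares `w_j²`, so
`E φ - E ψ ≤ (1/(2σ₀²) - 1/c a) ∑_{j ≥ a} w_j² = Δ̄`. Thus any two weights `g(w_ψ)`, `g(w_φ)`
are within a factor `e^Δ̄` of each other, which puts every normalized weight within
`(e^Δ̄ - 1)/|M(n,b)|` of the uniform one.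
-/

open MeasureTheory ProbabilityTheory
open Finset Real Equiv

noncomputable section

namespace PPT

/-- The set `M(n,b)` of permutations of `{0, …, n-1}` keeping the first `n - b` elements fixed. -/
def permSet (n b : ℕ) : Finset (Equiv.Perm (Fin n)) :=
  Finset.univ.filter fun ψ => ∀ i : Fin n, (i : ℕ) < n - b → ψ i = i

section WeightedPermutedSums

variable {ι : Type*} {T : Finset ι} {v c : ι → ℝ}

theorem sum_comp_div_le_of_le {ψ : Perm ι} (hψ : {i | ψ i ≠ i} ⊆ (T : Set ι))
    (hv : ∀ i, 0 ≤ v i) {lo : ℝ} (hlo : 0 < lo) (hc : ∀ j ∈ T, lo ≤ c j) :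
    ∑ j ∈ T, v (ψ j) / c j ≤ (∑ j ∈ T, v j) / lo :=
  calc ∑ j ∈ T, v (ψ j) / c j ≤ ∑ j ∈ T, v (ψ j) / lo :=
        sum_le_sum fun j hj => div_le_div_of_nonneg_left (hv _) hlo (hc j hj)
    _ = (∑ j ∈ T, v j) / lo := by rw [← sum_div, ψ.sum_comp T v hψ]

theorem div_le_sum_comp_div_of_le {ψ : Perm ι} (hψ : {i | ψ i ≠ i} ⊆ (T : Set ι))
    (hv : ∀ i, 0 ≤ v i) {hi : ℝ} (hc_pos : ∀ j ∈ T, 0 < c j) (hc : ∀ j ∈ T, c j ≤ hi) :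
    (∑ j ∈ T, v j) / hi ≤ ∑ j ∈ T, v (ψ j) / c j :=
  calc (∑ j ∈ T, v j) / hi = ∑ j ∈ T, v (ψ j) / hi := by rw [← sum_div, ψ.sum_comp T v hψ]
    _ ≤ ∑ j ∈ T, v (ψ j) / c j :=
        sum_le_sum fun j hj => div_le_div_of_nonneg_left (hv _) (hc_pos j hj) (hc j hj)

theorem sum_comp_div_sub_sum_comp_div_le [Fintype ι] {φ ψ : Perm ι}
    (hφ : {i | φ i ≠ i} ⊆ (T : Set ι)) (hψ : {i | ψ i ≠ i} ⊆ (T : Set ι)) (hv : ∀ i, 0 ≤ v i)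
    {lo hi : ℝ} (hlo : 0 < lo) (hc_lo : ∀ j ∈ T, lo ≤ c j) (hc_hi : ∀ j ∈ T, c j ≤ hi) :
    ∑ j, v (φ j) / c j - ∑ j, v (ψ j) / c j ≤ (1 / lo - 1 / hi) * ∑ j ∈ T, v j := by
  have hfix {σ : Perm ι} (hσ : {i | σ i ≠ i} ⊆ (T : Set ι)) {j : ι} (hj : j ∉ T) : σ j = j :=
    not_not.mp fun h => hj (hσ h)
  have hsum : ∑ j, v (φ j) / c j - ∑ j, v (ψ j) / c j
      = ∑ j ∈ T, v (φ j) / c j - ∑ j ∈ T, v (ψ j) / c j := by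
    rw [← sum_sub_distrib, ← sum_sub_distrib]
    refine (sum_subset (subset_univ T) fun j _ hj => ?_).symm
    rw [hfix hφ hj, hfix hψ hj, sub_self]
  rw [hsum, sub_mul, one_div_mul_eq_div, one_div_mul_eq_div]
  gcongr ?_ - ?_
  · exact sum_comp_div_le_of_le hφ hv hlo hc_lo
  · exact div_le_sum_comp_div_of_le hψ hv (fun j hj => hlo.trans_le (hc_lo j hj)) hc_hi

end WeightedPermutedSums

section TotalVariation

variable {ι : Type*} {S : Finset ι} {f : ι → ℝ} {x : ℝ}

theorem abs_div_sum_sub_inv_card_le (hf : ∀ i ∈ S, 0 < f i)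
    (hratio : ∀ i ∈ S, ∀ j ∈ S, f i ≤ x * f j) {i : ι} (hi : i ∈ S) :
    |f i / ∑ j ∈ S, f j - (#S : ℝ)⁻¹| ≤ (x - 1) * (#S : ℝ)⁻¹ := by
  have hF : 0 < ∑ j ∈ S, f j := sum_pos hf ⟨i, hi⟩
  have hN : (0 : ℝ) < #S := by exact_mod_cast card_pos.mpr ⟨i, hi⟩
  have hx : 1 ≤ x := le_of_mul_le_mul_right (by simpa using hratio i hi i hi) (hf i hi)
  have hupper : #S * f i ≤ x * ∑ j ∈ S, f j := by
    rw [mul_sum, ← nsmul_eq_mul]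
    exact card_nsmul_le_sum S _ _ (hratio i hi)
  have hlower : ∑ j ∈ S, f j ≤ x * (#S * f i) := by
    rw [mul_left_comm, ← nsmul_eq_mul]
    exact sum_le_card_nsmul S _ _ fun j hj => hratio j hj i hi
  have hsplit : f i / ∑ j ∈ S, f j - (#S : ℝ)⁻¹
      = (#S * f i - ∑ j ∈ S, f j) / (∑ j ∈ S, f j) * (#S : ℝ)⁻¹ := by
    field_simp
  rw [hsplit, abs_mul, abs_of_pos (inv_pos.mpr hN), abs_div, abs_of_pos hF]
  gcongr
  rw [div_le_iff₀ hF, abs_sub_le_iff]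
  -- the lower side uses `∑ f ≤ x * (#S * f i)` together with `x * (2 - x) ≤ 1`
  constructor <;> nlinarith [mul_nonneg (hf i hi).le (sq_nonneg (x - 1))]

theorem half_sum_abs_div_sum_sub_inv_card_le (hS : S.Nonempty) (hf : ∀ i ∈ S, 0 < f i)
    (hratio : ∀ i ∈ S, ∀ j ∈ S, f i ≤ x * f j) :
    1 / 2 * ∑ i ∈ S, |f i / ∑ j ∈ S, f j - (#S : ℝ)⁻¹| ≤ (x - 1) / 2 := by
  have hN : (#S : ℝ) ≠ 0 := by exact_mod_cast hS.card_pos.ne'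
  calc 1 / 2 * ∑ i ∈ S, |f i / ∑ j ∈ S, f j - (#S : ℝ)⁻¹|
      ≤ 1 / 2 * ∑ _i ∈ S, (x - 1) * (#S : ℝ)⁻¹ := by
        gcongr with i hi
        exact abs_div_sum_sub_inv_card_le hf hratio hi
    _ = (x - 1) / 2 := by
        rw [sum_const, nsmul_eq_mul]
        field_simp

end TotalVariation

theorem one_mem_permSet (n b : ℕ) : 1 ∈ permSet n b := by
  simp [permSet]

theorem setOf_apply_ne_subset_of_mem_permSet {n b : ℕ} {ψ : Perm (Fin n)}
    (hψ : ψ ∈ permSet n b) :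
    {i | ψ i ≠ i} ⊆ ((univ.filter fun j : Fin n => n - b ≤ (j : ℕ)) : Set (Fin n)) := by
  intro i hi
  simp only [permSet, mem_filter, mem_univ, true_and] at hψ
  simp only [coe_filter, mem_univ, true_and, Set.mem_ofPred_eq]
  by_contra! h
  exact hi (hψ i h)

end PPT

open PPT in
/-- Lemma A4: total variation bound between the permutation measure tilted
by the Gaussian density `g` of `N(0, σ²D + σ₀²Iₙ)` and the uniform measure on the permutation
set `M(n,b)`:  `‖ν − ν₀‖_TV ≤ (e^{Δ̄} − 1)/2` with
`Δ̄ = d_a σ² / (2σ₀²(σ²d_a + σ₀²)) · Σ_{j=a}^n w_j²`, `a = n − b + 1`. -/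
theorem tv_bound_tilted_permutation_measure
    {n : ℕ} (b : ℕ) (hb1 : 1 ≤ b) (hb2 : b ≤ n)
    (σ σ0 : ℝ) (hσ0 : 0 < σ0)
    -- the diagonal of D, nonincreasing and nonnegative
    (dvec : Fin n → ℝ)
    (hd_mono : ∀ i j : Fin n, i ≤ j → dvec j ≤ dvec i) (hd_nonneg : ∀ i, 0 ≤ dvec i)
    -- the density of N(0, σ²D + σ₀²Iₙ)
    (g : (Fin n → ℝ) → ℝ)
    (hg : ∀ x, g x = (2 * Real.pi) ^ (-(n : ℝ) / 2) *
      ∏ j, ((σ ^ 2 * dvec j + σ0 ^ 2) ^ (-(1 : ℝ) / 2) *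
        Real.exp (-(x j ^ 2) / (2 * (σ ^ 2 * dvec j + σ0 ^ 2)))))
    -- the observed vector w
    (w : Fin n → ℝ)
    -- Δ̄ (with the index a = n − b + 1, i.e. position n − b in 0-based indexing)
    (Δ : ℝ)
    (hΔ : Δ = (dvec ⟨n - b, by omega⟩ * σ ^ 2 /
        (2 * σ0 ^ 2 * (σ ^ 2 * dvec ⟨n - b, by omega⟩ + σ0 ^ 2))) *
      ∑ j ∈ Finset.univ.filter (fun j : Fin n => n - b ≤ (j : ℕ)), w j ^ 2) :
    -- total variation distance between ν({ψ}) ∝ g(w_ψ) and the uniform measure ν₀ on M(n,b)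
    (1 / 2) * ∑ ψ ∈ permSet n b,
        |g (w ∘ ψ) / (∑ φ ∈ permSet n b, g (w ∘ φ)) - ((permSet n b).card : ℝ)⁻¹| ≤
      (Real.exp Δ - 1) / 2 := by
  set T := Finset.univ.filter fun j : Fin n => n - b ≤ (j : ℕ)
  set a : Fin n := ⟨n - b, by omega⟩
  set c : Fin n → ℝ := fun j => 2 * (σ ^ 2 * dvec j + σ0 ^ 2)
  have hc_lo : ∀ j ∈ T, 2 * σ0 ^ 2 ≤ c j := fun j _ => by
    have := mul_nonneg (sq_nonneg σ) (hd_nonneg j)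
    simp only [c]
    linarith
  have hc_hi : ∀ j ∈ T, c j ≤ c a := fun j hj => by
    have := hd_mono a j (Fin.le_def.mpr (mem_filter.mp hj).2)
    simp only [c]
    gcongr
  have hΔ' : Δ = (1 / (2 * σ0 ^ 2) - 1 / c a) * ∑ j ∈ T, w j ^ 2 := by
    have := hd_nonneg a
    rw [hΔ]
    simp only [c]
    field_simp
    ring
  set K := (2 * π) ^ (-(n : ℝ) / 2) * ∏ j, (σ ^ 2 * dvec j + σ0 ^ 2) ^ (-(1 : ℝ) / 2)
  have hK : 0 < K := by
    have (j : Fin n) : 0 < σ ^ 2 * dvec j + σ0 ^ 2 := by have := hd_nonneg j; positivity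
    exact mul_pos (by positivity) (prod_pos fun j _ => rpow_pos_of_pos (this j) _)
  have hg' : ∀ ψ : Perm (Fin n), g (w ∘ ψ) = K * exp (-∑ j, w (ψ j) ^ 2 / c j) := by
    intro ψ
    simp only [hg, prod_mul_distrib, ← exp_sum, ← sum_neg_distrib, neg_div, K, c, mul_assoc,
      Function.comp_apply]
  refine half_sum_abs_div_sum_sub_inv_card_le ⟨1, one_mem_permSet n b⟩
    (fun ψ _ => by rw [hg']; positivity) fun ψ hψ φ hφ => ?_
  rw [hg', hg', mul_left_comm, ← exp_add]
  gcongr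
  have := sum_comp_div_sub_sum_comp_div_le (setOf_apply_ne_subset_of_mem_permSet hφ)
    (setOf_apply_ne_subset_of_mem_permSet hψ) (fun j => sq_nonneg (w j)) (by positivity)
    hc_lo hc_hi
  linarith
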